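/- If g2 > g1 ≥ 1 and g2 > 1, then every continuous map f : Σ_{g1} → Σ_{g2} between closed orientable surfaces of genus g1 and g2 has degree 0. -/

import Mathlib

open scoped BigOperators

noncomputable section

/-- Singular `n`-simplices of `X`: continuous maps from the standard `n`-simplex. -/
abbrev SingularSimplex (n : ℕ) (X : Type) [TopologicalSpace X] :=
  C(↥(stdSimplex ℝ (Fin (n + 1))), X)

/-- Real singular `n`-chains: finite formal `ℝ`-linear combinations of singular
`n`-simplices. -/
abbrev SingularChain (n : ℕ) (X : Type) [TopologicalSpace X] :=
  SingularSimplex n X →₀ ℝ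

/-- The `ℓ¹`-norm `|c|₁ = ∑ |a_j|` of a singular chain `c = ∑ a_j σ_j`. -/
def chainL1 {n : ℕ} {X : Type} [TopologicalSpace X] (c : SingularChain n X) : ℝ :=
  ∑ σ ∈ c.support, |c σ|

/-- The `i`-th face inclusion of the standard `n`-simplex into the standard
`(n+1)`-simplex (insert the barycentric coordinate `0` in position `i`). -/
def faceMap (n : ℕ) (i : Fin (n + 2)) :
    C(↥(stdSimplex ℝ (Fin (n + 1))), ↥(stdSimplex ℝ (Fin (n + 2)))) :=
  ⟨fun x => ⟨(i.insertNth (0 : ℝ) x.1 : Fin (n + 2) → ℝ), by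
      obtain ⟨x, hx⟩ := x
      refine ⟨fun j => ?_, ?_⟩
      · exact i.succAboveCases (by simp) (fun j => by simpa using hx.1 j) j
      · rw [Fin.sum_univ_succAbove _ i]
        simpa using hx.2⟩,
    by
      have h1 : Continuous fun y : Fin (n + 1) → ℝ =>
          (i.insertNth (0 : ℝ) y : Fin (n + 2) → ℝ) :=
        Continuous.finInsertNth i continuous_const continuous_id
      have h : Continuous fun x : ↥(stdSimplex ℝ (Fin (n + 1))) =>
          (i.insertNth (0 : ℝ) x.1 : Fin (n + 2) → ℝ) :=
        h1.comp continuous_subtype_val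
      exact h.subtype_mk _⟩

/-- The singular boundary operator `∂ : C_{n+1}(X;ℝ) → C_n(X;ℝ)`,
`∂σ = ∑ᵢ (-1)ⁱ σ ∘ δᵢ`. -/
def boundary (n : ℕ) (X : Type) [TopologicalSpace X]
    (c : SingularChain (n + 1) X) : SingularChain n X :=
  c.sum fun σ r => ∑ i : Fin (n + 2),
    ((-1 : ℝ) ^ (i : ℕ) * r) • Finsupp.single (σ.comp (faceMap n i)) (1 : ℝ)

/-- The pushforward (chain map) `f_#` of singular chains along a continuous map. -/
def pushforward {n : ℕ} {X Y : Type} [TopologicalSpace X] [TopologicalSpace Y]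
    (f : C(X, Y)) (c : SingularChain n X) : SingularChain n Y :=
  Finsupp.mapDomain (fun σ => f.comp σ) c

/-- `F` is the (nonempty) set of real singular `n`-cycles representing a fixed
homology class of `X` — e.g. the fundamental class `[X]` of an oriented closed
connected `n`-manifold `X`.  It consists of cycles, and two of its members differ
exactly by a boundary. -/
def IsFundamentalClass (n : ℕ) (X : Type) [TopologicalSpace X]
    (F : Set (SingularChain n X)) : Prop :=
  F.Nonempty ∧
  (∀ c ∈ F, ∀ m (h : n = m + 1), boundary m X (h ▸ c) = 0) ∧
  (∀ c ∈ F, ∀ c', c' ∈ F ↔ ∃ b, c' = c + boundary n X b)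

/-- The simplicial volume (Gromov norm) associated with the class `F`:
`inf { |c|₁ : c ∈ F }`. -/
def simplicialVolume {n : ℕ} {X : Type} [TopologicalSpace X]
    (F : Set (SingularChain n X)) : ℝ :=
  sInf (chainL1 '' F)

/-- `f` has degree `d` with respect to the classes `FX`, `FY`:
`f_*[X] = d·[Y]`, i.e. the pushforward of any representative of `[X]` is
homologous to `d` times a representative of `[Y]`. -/
def HasDegree {n : ℕ} {X Y : Type} [TopologicalSpace X] [TopologicalSpace Y]
    (f : C(X, Y)) (FX : Set (SingularChain n X)) (FY : Set (SingularChain n Y))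
    (d : ℤ) : Prop :=
  ∀ c ∈ FX, ∃ c' ∈ FY, ∃ b, pushforward f c = (d : ℝ) • c' + boundary n Y b

/-! Gromov's degree inequality `|deg f| · ‖N‖ ≤ ‖M‖` holds because `f_#` does not increase the
`ℓ¹`-norm: if `f_*[M] = d·[N]` with `d ≠ 0`, then `d⁻¹ · f_# c` represents `[N]` for every
representative `c` of `[M]`. With `‖Σ_g‖ = 4g - 4` and `‖N‖ ≥ 0`, a nonzero degree would force
`4g₂ - 4 ≤ 4g₁ - 4`. -/

section ChainL1

variable {n : ℕ} {X Y : Type} [TopologicalSpace X] [TopologicalSpace Y]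

lemma chainL1_nonneg (c : SingularChain n X) : 0 ≤ chainL1 c :=
  Finset.sum_nonneg fun _ _ => abs_nonneg _

lemma chainL1_eq_sum_of_support_subset (c : SingularChain n X)
    {s : Finset (SingularSimplex n X)} (hs : c.support ⊆ s) :
    chainL1 c = ∑ σ ∈ s, |c σ| :=
  Finset.sum_subset hs fun σ _ hσ => by simp [Finsupp.notMem_support_iff.mp hσ]

@[simp]
lemma chainL1_zero : chainL1 (0 : SingularChain n X) = 0 := by
  simp [chainL1]

@[simp]
lemma chainL1_single (σ : SingularSimplex n X) (r : ℝ) :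
    chainL1 (Finsupp.single σ r) = |r| := by
  rw [chainL1_eq_sum_of_support_subset _ Finsupp.support_single_subset]
  simp

lemma chainL1_add_le (x y : SingularChain n X) :
    chainL1 (x + y) ≤ chainL1 x + chainL1 y := by
  classical
  rw [chainL1_eq_sum_of_support_subset (x + y) Finsupp.support_add,
    chainL1_eq_sum_of_support_subset x Finset.subset_union_left,
    chainL1_eq_sum_of_support_subset y Finset.subset_union_right, ← Finset.sum_add_distrib]
  exact Finset.sum_le_sum fun σ _ => by simpa using abs_add_le (x σ) (y σ)

lemma chainL1_smul (r : ℝ) (c : SingularChain n X) :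
    chainL1 (r • c) = |r| * chainL1 c := by
  rcases eq_or_ne r 0 with rfl | hr
  · simp
  · rw [chainL1, chainL1, Finsupp.support_smul_eq hr, Finset.mul_sum]
    simp only [Finsupp.smul_apply, smul_eq_mul, abs_mul]

lemma chainL1_mapDomain_le (g : SingularSimplex n X → SingularSimplex n Y)
    (c : SingularChain n X) :
    chainL1 (Finsupp.mapDomain g c) ≤ chainL1 c := by
  rw [Finsupp.mapDomain, Finsupp.sum]
  refine (Finset.le_sum_of_subadditive chainL1 chainL1_zero.le chainL1_add_le _ _).trans_eq ?_
  simp only [chainL1_single]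
  rfl

lemma chainL1_pushforward_le (f : C(X, Y)) (c : SingularChain n X) :
    chainL1 (pushforward f c) ≤ chainL1 c :=
  chainL1_mapDomain_le _ c

end ChainL1

lemma boundary_smul (n : ℕ) (X : Type) [TopologicalSpace X] (r : ℝ)
    (c : SingularChain (n + 1) X) :
    boundary n X (r • c) = r • boundary n X c := by
  unfold boundary
  rw [Finsupp.sum_smul_index' (fun σ => by simp), Finsupp.smul_sum]
  refine Finsupp.sum_congr fun σ _ => ?_
  rw [Finset.smul_sum]
  refine Finset.sum_congr rfl fun i _ => ?_
  rw [smul_smul, smul_eq_mul, mul_left_comm]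

section SimplicialVolume

variable {n : ℕ} {X Y : Type} [TopologicalSpace X] [TopologicalSpace Y]

lemma simplicialVolume_nonneg (F : Set (SingularChain n X)) : 0 ≤ simplicialVolume F :=
  Real.sInf_nonneg <| by
    rintro _ ⟨c, -, rfl⟩
    exact chainL1_nonneg c

lemma simplicialVolume_le_chainL1 {F : Set (SingularChain n X)} {c : SingularChain n X}
    (hc : c ∈ F) : simplicialVolume F ≤ chainL1 c :=
  csInf_le ⟨0, by rintro _ ⟨c, -, rfl⟩; exact chainL1_nonneg c⟩ ⟨c, hc, rfl⟩

lemma IsFundamentalClass.add_boundary_mem {F : Set (SingularChain n X)}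
    (hF : IsFundamentalClass n X F) {c : SingularChain n X} (hc : c ∈ F)
    (b : SingularChain (n + 1) X) : c + boundary n X b ∈ F :=
  (hF.2.2 c hc _).mpr ⟨b, rfl⟩

theorem HasDegree.abs_mul_simplicialVolume_le {f : C(X, Y)} {FX : Set (SingularChain n X)}
    {FY : Set (SingularChain n Y)} {d : ℤ} (hdeg : HasDegree f FX FY d)
    (hFX : FX.Nonempty) (hFY : IsFundamentalClass n Y FY) :
    |(d : ℝ)| * simplicialVolume FY ≤ simplicialVolume FX := by
  rcases eq_or_ne (d : ℝ) 0 with hd | hd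
  · rw [hd, abs_zero, zero_mul]
    exact simplicialVolume_nonneg FX
  refine le_csInf (hFX.image _) ?_
  rintro _ ⟨c, hc, rfl⟩
  obtain ⟨c', hc', b, hfc⟩ := hdeg c hc
  have hmem : (d : ℝ)⁻¹ • pushforward f c ∈ FY := by
    rw [hfc, smul_add, inv_smul_smul₀ hd, ← boundary_smul]
    exact hFY.add_boundary_mem hc' _
  calc |(d : ℝ)| * simplicialVolume FY
      ≤ |(d : ℝ)| * chainL1 ((d : ℝ)⁻¹ • pushforward f c) := by
        gcongr
        exact simplicialVolume_le_chainL1 hmem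
    _ = chainL1 (pushforward f c) := by
        rw [chainL1_smul, abs_inv, mul_inv_cancel_left₀ (abs_ne_zero.mpr hd)]
    _ ≤ chainL1 c := chainL1_pushforward_le f c

end SimplicialVolume

theorem stmt7_general (g1 g2 : ℕ) (hg12 : g1 < g2)
    (M N : Type) [TopologicalSpace M] [TopologicalSpace N]
    (FM : Set (SingularChain 2 M)) (FN : Set (SingularChain 2 N))
    (hFM : IsFundamentalClass 2 M FM) (hFN : IsFundamentalClass 2 N FN)
    (hvolM : simplicialVolume FM = 4 * (g1 : ℝ) - 4)
    (hvolN : simplicialVolume FN = 4 * (g2 : ℝ) - 4)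
    (f : C(M, N)) (d : ℤ) (hdeg : HasDegree f FM FN d) :
    d = 0 := by
  by_contra hd
  have hd_abs : (1 : ℝ) ≤ |(d : ℝ)| := by
    rw [← Int.cast_abs]
    exact_mod_cast Int.one_le_abs hd
  have hgromov := hdeg.abs_mul_simplicialVolume_le hFM.1 hFN
  have hvol_le : simplicialVolume FN ≤ simplicialVolume FM :=
    le_trans (le_mul_of_one_le_left (simplicialVolume_nonneg FN) hd_abs) hgromov
  rw [hvolM, hvolN] at hvol_le
  have hg : (g2 : ℝ) ≤ g1 := by linarith
  exact hg12.not_ge (by exact_mod_cast hg)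

/-- If `g2 > g1 ≥ 1` and `g2 > 1`, every continuous map
`f : Σ_{g1} → Σ_{g2}` between closed orientable surfaces of genus `g1`, `g2`
(encoded via their fundamental classes and `‖Σ_g‖ = 4g - 4`) has degree `0`. -/
theorem stmt7 (g1 g2 : ℕ) (hg1 : 1 ≤ g1) (hg12 : g1 < g2) (hg2 : 1 < g2)
    (M N : Type) [TopologicalSpace M] [TopologicalSpace N]
    (FM : Set (SingularChain 2 M)) (FN : Set (SingularChain 2 N))
    (hFM : IsFundamentalClass 2 M FM) (hFN : IsFundamentalClass 2 N FN)
    (hvolM : simplicialVolume FM = 4 * (g1 : ℝ) - 4)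
    (hvolN : simplicialVolume FN = 4 * (g2 : ℝ) - 4)
    (f : C(M, N)) (d : ℤ) (hdeg : HasDegree f FM FN d) :
    d = 0 :=
  stmt7_general g1 g2 hg12 M N FM FN hFM hFN hvolM hvolN f d hdeg

end
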